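/- Let c : ℝ^d × ℝ^d → ℝ be continuous and bounded, let h̄ be a nonnegative function in L^∞(ℝ^d × ℝ^d) with compact support, and let f, g be nonnegative compactly supported functions in L¹(ℝ^d) with equal total mass such that Γ(f,g)^h̄ is nonempty. Suppose h ∈ Γ(f,g)^h̄ minimizes I_c over Γ(f,g)^h̄. Fix any (x₀,y₀) ∈ ℝ^d × ℝ^d and any integer n ≥ 1, and let h_n(x,y) := h(x₀ + x/n, y₀ + y/n) and h̄_n(x,y) := h̄(x₀ + x/n, y₀ + y/n) on Q. Then h_n minimizes the functional k ↦ ∫_Q c(x₀ + x/n, y₀ + y/n)·k(x,y) dx dy among all nonnegative k ∈ L¹(Q) with the same marginals as h_n (i.e. ∫ k(x,y) dy = ∫ h_n(x,y) dy for a.e. x ∈ [-1/2,1/2]^d and ∫ k(x,y) dx = ∫ h_n(x,y) dx for a.e. y ∈ [-1/2,1/2]^d) and with k ≤ h̄_n a.e. on Q. -/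

import Mathlib

/-!
Given a competitor `k` on `Q`, graft its blow-down `q ↦ k (n • (q - z))` into `h` on the small
cell `z + n⁻¹ • Q`, keeping `h` elsewhere. On each slice through the cell, the change of variables
`p = n • (q - z)` turns the marginal constraints on `k` into the statement that the grafted slice
has the same integral as the slice of `h`; so the grafted function lies in `Γ(f,g)^h̄` and costs at
least `I_c(h)`. The cost changes only on the cell, where it changes by `n^(-2d)` times the
difference of the two blown-up costs over `Q`.
-/

open MeasureTheory Filter Set Topology

noncomputable section

/-- The transportation cost `I_c(h) = ∫∫ c(x,y) h(x,y) dx dy` on `ℝ^d × ℝ^d`. -/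
def Icost {d : ℕ} (c h : ((Fin d → ℝ) × (Fin d → ℝ)) → ℝ) : ℝ :=
  ∫ p, c p * h p

/-- `h ∈ Γ(f,g)`: `h` is a nonnegative integrable joint density on `ℝ^d × ℝ^d`
with marginals `f` and `g`. -/
def InGamma {d : ℕ} (f g : (Fin d → ℝ) → ℝ)
    (h : ((Fin d → ℝ) × (Fin d → ℝ)) → ℝ) : Prop :=
  Integrable h volume ∧ (∀ᵐ p ∂volume, 0 ≤ h p) ∧
    (∀ᵐ x ∂volume, (∫ y, h (x, y)) = f x) ∧
    (∀ᵐ y ∂volume, (∫ x, h (x, y)) = g y)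

/-- `h ∈ Γ(f,g)^h̄`: `h ∈ Γ(f,g)` and `h` is dominated by `h̄` a.e. -/
def InGammaBar {d : ℕ} (f g : (Fin d → ℝ) → ℝ)
    (hbar h : ((Fin d → ℝ) × (Fin d → ℝ)) → ℝ) : Prop :=
  InGamma f g h ∧ ∀ᵐ p ∂volume, h p ≤ hbar p

/-- The cube `[-1/2, 1/2]^d ⊆ ℝ^d`. -/
def cube (d : ℕ) : Set (Fin d → ℝ) :=
  Set.Icc (fun _ => -(1/2 : ℝ)) (fun _ => (1/2 : ℝ))

def blowupMap {E : Type*} [AddCommGroup E] [Module ℝ E] (R : ℝ) (z q : E) : E := R • (q - z)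

section Algebra

variable {E : Type*} [AddCommGroup E] [Module ℝ E] {R : ℝ}

lemma add_inv_smul_blowupMap (hR : R ≠ 0) (z q : E) : z + R⁻¹ • blowupMap R z q = q := by
  simp [blowupMap, smul_smul, inv_mul_cancel₀ hR]

lemma blowupMap_add_inv_smul (hR : R ≠ 0) (z p : E) : blowupMap R z (z + R⁻¹ • p) = p := by
  simp [blowupMap, smul_smul, mul_inv_cancel₀ hR]

open Classical in
def graft (R : ℝ) (z : E) (s : Set E) (k h : E → ℝ) : E → ℝ :=
  (blowupMap R z ⁻¹' s).piecewise (k ∘ blowupMap R z) h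

open Classical in
lemma graft_apply (z : E) (s : Set E) (k h : E → ℝ) (q : E) :
    graft R z s k h q = if blowupMap R z q ∈ s then k (blowupMap R z q) else h q :=
  rfl

lemma mul_graft (hR : R ≠ 0) (z : E) (s : Set E) (g k h : E → ℝ) :
    (fun q => g q * graft R z s k h q) =
      graft R z s (fun p => g (z + R⁻¹ • p) * k p) (fun q => g q * h q) := by
  ext q
  by_cases hq : blowupMap R z q ∈ s <;> simp [graft_apply, hq, add_inv_smul_blowupMap hR]

variable {F : Type*} [AddCommGroup F] [Module ℝ F]

lemma blowupMap_prod_mk (z : E × F) (x : E) (y : F) :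
    blowupMap R z (x, y) = (blowupMap R z.1 x, blowupMap R z.2 y) :=
  rfl

lemma graft_prod_mk_of_mem {s : Set E} {t : Set F} (z : E × F) {x : E}
    (hx : blowupMap R z.1 x ∈ s) (k h : E × F → ℝ) :
    (fun y => graft R z (s ×ˢ t) k h (x, y)) =
      graft R z.2 t (fun v => k (blowupMap R z.1 x, v)) (fun y => h (x, y)) := by
  ext y
  by_cases hy : blowupMap R z.2 y ∈ t <;> simp [graft_apply, blowupMap_prod_mk, hx, hy]

lemma graft_prod_mk_of_notMem {s : Set E} {t : Set F} (z : E × F) {x : E}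
    (hx : blowupMap R z.1 x ∉ s) (k h : E × F → ℝ) (y : F) :
    graft R z (s ×ˢ t) k h (x, y) = h (x, y) := by
  simp [graft_apply, blowupMap_prod_mk, hx]

lemma graft_prod_swap (s : Set E) (t : Set F) (z : E × F) (k h : E × F → ℝ) (x : E) (y : F) :
    graft R z (s ×ˢ t) k h (x, y) =
      graft R z.swap (t ×ˢ s) (k ∘ Prod.swap) (h ∘ Prod.swap) (y, x) := by
  by_cases hx : blowupMap R z.1 x ∈ s <;> by_cases hy : blowupMap R z.2 y ∈ t <;>
    simp [graft_apply, blowupMap_prod_mk, hx, hy]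

end Algebra

section Measure

variable {E : Type*} [NormedAddCommGroup E] [NormedSpace ℝ E] [MeasurableSpace E] [BorelSpace E]

lemma measurable_blowupMap (R : ℝ) (z : E) : Measurable (blowupMap R z) :=
  (measurable_id.sub_const z).const_smul R

variable [FiniteDimensional ℝ E] (μ : Measure E) [μ.IsAddHaarMeasure] {R : ℝ}

lemma quasiMeasurePreserving_blowupMap (hR : R ≠ 0) (z : E) :
    Measure.QuasiMeasurePreserving (blowupMap R z) μ μ :=
  (Measure.quasiMeasurePreserving_smul μ hR).comp
    (measurePreserving_sub_right μ z).quasiMeasurePreserving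

lemma integral_comp_blowupMap (R : ℝ) (z : E) (F : E → ℝ) :
    ∫ q, F (blowupMap R z q) ∂μ = |(R ^ Module.finrank ℝ E)⁻¹| * ∫ p, F p ∂μ := by
  rw [← smul_eq_mul, ← Measure.integral_comp_smul μ F R]
  exact integral_sub_right_eq_self (fun x => F (R • x)) z

lemma setIntegral_preimage_blowupMap (hR : R ≠ 0) (z : E) {s : Set E}
    (hs : MeasurableSet s) (F : E → ℝ) :
    ∫ q in blowupMap R z ⁻¹' s, F q ∂μ =
      |(R ^ Module.finrank ℝ E)⁻¹| * ∫ p in s, F (z + R⁻¹ • p) ∂μ := by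
  have hind : (blowupMap R z ⁻¹' s).indicator F =
      fun q => s.indicator (fun p => F (z + R⁻¹ • p)) (blowupMap R z q) := by
    ext q
    by_cases hq : blowupMap R z q ∈ s <;> simp [hq, add_inv_smul_blowupMap hR]
  rw [← integral_indicator (measurable_blowupMap R z hs), ← integral_indicator hs, hind,
    integral_comp_blowupMap]

lemma integrableOn_comp_blowupMap (hR : R ≠ 0) (z : E) {s : Set E}
    (hs : MeasurableSet s) {F : E → ℝ} (hF : IntegrableOn F s μ) :
    IntegrableOn (F ∘ blowupMap R z) (blowupMap R z ⁻¹' s) μ := by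
  rw [← integrable_indicator_iff (measurable_blowupMap R z hs),
    show (blowupMap R z ⁻¹' s).indicator (F ∘ blowupMap R z) = s.indicator F ∘ blowupMap R z
      from funext fun _ => indicator_comp_right _]
  exact ((integrable_indicator_iff hs).2 hF |>.comp_smul hR).comp_sub_right z

lemma integrable_graft (hR : R ≠ 0) (z : E) {s : Set E} (hs : MeasurableSet s) {k h : E → ℝ}
    (hk : IntegrableOn k s μ) (hh : Integrable h μ) : Integrable (graft R z s k h) μ := by
  classical
  exact Integrable.piecewise (measurable_blowupMap R z hs)
    (integrableOn_comp_blowupMap μ hR z hs hk) hh.integrableOn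

lemma ae_graft (hR : R ≠ 0) (z : E) {s : Set E} (hs : MeasurableSet s) {k h : E → ℝ}
    (r : E → ℝ → Prop) (hk : ∀ᵐ p ∂μ.restrict s, r (z + R⁻¹ • p) (k p))
    (hh : ∀ᵐ q ∂μ, r q (h q)) : ∀ᵐ q ∂μ, r q (graft R z s k h q) := by
  filter_upwards [(quasiMeasurePreserving_blowupMap μ hR z).ae ((ae_restrict_iff' hs).1 hk), hh]
    with q hkq hhq
  by_cases hq : blowupMap R z q ∈ s
  · simpa [graft_apply, hq, add_inv_smul_blowupMap hR] using hkq hq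
  · simpa [graft_apply, hq] using hhq

lemma integral_graft (hR : R ≠ 0) (z : E) {s : Set E} (hs : MeasurableSet s) {k h : E → ℝ}
    (hk : IntegrableOn k s μ) (hh : Integrable h μ) :
    ∫ q, graft R z s k h q ∂μ = ∫ q, h q ∂μ +
      |(R ^ Module.finrank ℝ E)⁻¹| * (∫ p in s, k p ∂μ - ∫ p in s, h (z + R⁻¹ • p) ∂μ) := by
  classical
  have hB := measurable_blowupMap R z hs
  rw [graft, integral_piecewise hB (integrableOn_comp_blowupMap μ hR z hs hk) hh.integrableOn,
    ← integral_add_compl hB hh, setIntegral_preimage_blowupMap μ hR z hs,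
    setIntegral_preimage_blowupMap μ hR z hs]
  simp only [Function.comp_apply, blowupMap_add_inv_smul hR]
  ring

end Measure

section Product

variable {E F : Type*} [NormedAddCommGroup E] [NormedSpace ℝ E] [MeasurableSpace E] [BorelSpace E]
  [FiniteDimensional ℝ E] [NormedAddCommGroup F] [NormedSpace ℝ F] [MeasurableSpace F]
  [BorelSpace F] [FiniteDimensional ℝ F] (μ : Measure E) [μ.IsAddHaarMeasure]
  (ν : Measure F) [ν.IsAddHaarMeasure] {R : ℝ}

lemma ae_integral_graft_fst (hR : R ≠ 0) (z : E × F) {s : Set E} {t : Set F}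
    (hs : MeasurableSet s) (ht : MeasurableSet t) {k h : E × F → ℝ}
    (hk : Integrable k ((μ.restrict s).prod (ν.restrict t))) (hh : Integrable h (μ.prod ν))
    (hmarg : ∀ᵐ x ∂μ.restrict s, ∫ y in t, k (x, y) ∂ν = ∫ y in t, h (z + R⁻¹ • (x, y)) ∂ν) :
    ∀ᵐ x ∂μ, ∫ y, graft R z (s ×ˢ t) k h (x, y) ∂ν = ∫ y, h (x, y) ∂ν := by
  have hslices := (quasiMeasurePreserving_blowupMap μ hR z.1).ae
    ((ae_restrict_iff' hs).1 (hk.prod_right_ae.and hmarg))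
  filter_upwards [hslices, hh.prod_right_ae] with x hkx hhx
  by_cases hx : blowupMap R z.1 x ∈ s
  · obtain ⟨hk_int, hk_eq⟩ := hkx hx
    have hpt : ∀ v, z + R⁻¹ • (blowupMap R z.1 x, v) = (x, z.2 + R⁻¹ • v) := fun v =>
      Prod.ext (add_inv_smul_blowupMap hR _ _) rfl
    rw [graft_prod_mk_of_mem z hx, integral_graft ν hR z.2 ht hk_int hhx, hk_eq]
    simp only [hpt, sub_self, mul_zero, add_zero]
  · simp [graft_prod_mk_of_notMem z hx]

lemma ae_integral_graft_snd (hR : R ≠ 0) (z : E × F) {s : Set E} {t : Set F}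
    (hs : MeasurableSet s) (ht : MeasurableSet t) {k h : E × F → ℝ}
    (hk : Integrable k ((μ.restrict s).prod (ν.restrict t))) (hh : Integrable h (μ.prod ν))
    (hmarg : ∀ᵐ y ∂ν.restrict t, ∫ x in s, k (x, y) ∂μ = ∫ x in s, h (z + R⁻¹ • (x, y)) ∂μ) :
    ∀ᵐ y ∂ν, ∫ x, graft R z (s ×ˢ t) k h (x, y) ∂μ = ∫ x, h (x, y) ∂μ := by
  simp_rw [graft_prod_swap s t z]
  exact ae_integral_graft_fst ν μ hR z.swap ht hs hk.swap hh.swap hmarg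

end Product

theorem blowup_inherits_optimality_general (d : ℕ)
    (c : ((Fin d → ℝ) × (Fin d → ℝ)) → ℝ)
    (hc_cont : Continuous c) (hc_bdd : ∃ M, ∀ p, |c p| ≤ M)
    (hbar : ((Fin d → ℝ) × (Fin d → ℝ)) → ℝ)
    (f g : (Fin d → ℝ) → ℝ)
    (h : ((Fin d → ℝ) × (Fin d → ℝ)) → ℝ)
    (hmem : InGammaBar f g hbar h)
    (hopt : ∀ k, InGammaBar f g hbar k → Icost c h ≤ Icost c k)
    (z : (Fin d → ℝ) × (Fin d → ℝ)) (n : ℕ) (hn : 1 ≤ n) :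
    ∀ k : ((Fin d → ℝ) × (Fin d → ℝ)) → ℝ,
      IntegrableOn k (cube d ×ˢ cube d) volume →
      (∀ᵐ p ∂volume.restrict (cube d ×ˢ cube d), 0 ≤ k p) →
      (∀ᵐ x ∂volume.restrict (cube d),
        (∫ y in cube d, k (x, y)) = ∫ y in cube d, h (z + (n : ℝ)⁻¹ • (x, y))) →
      (∀ᵐ y ∂volume.restrict (cube d),
        (∫ x in cube d, k (x, y)) = ∫ x in cube d, h (z + (n : ℝ)⁻¹ • (x, y))) →
      (∀ᵐ p ∂volume.restrict (cube d ×ˢ cube d), k p ≤ hbar (z + (n : ℝ)⁻¹ • p)) →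
      (∫ p in cube d ×ˢ cube d, c (z + (n : ℝ)⁻¹ • p) * h (z + (n : ℝ)⁻¹ • p)) ≤
        ∫ p in cube d ×ˢ cube d, c (z + (n : ℝ)⁻¹ • p) * k p := by
  intro k hk hk_nonneg hk_fst hk_snd hk_le
  have : (volume : Measure ((Fin d → ℝ) × (Fin d → ℝ))).IsAddHaarMeasure :=
    Measure.prod.instIsAddHaarMeasure _ _
  have hR : (n : ℝ) ≠ 0 := Nat.cast_ne_zero.2 (by omega)
  have hcube : MeasurableSet (cube d) := measurableSet_Icc
  have hQ := hcube.prod hcube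
  have hk' : Integrable k ((volume.restrict (cube d)).prod (volume.restrict (cube d))) := by
    rwa [Measure.prod_restrict]
  have hh : Integrable h volume := hmem.1.1
  have hcompetitor : InGammaBar f g hbar (graft n z (cube d ×ˢ cube d) k h) :=
    ⟨⟨integrable_graft volume hR z hQ hk hh,
      ae_graft volume hR z hQ (fun _ t => 0 ≤ t) hk_nonneg hmem.1.2.1,
      (ae_integral_graft_fst volume volume hR z hcube hcube hk' hh hk_fst).and hmem.1.2.2.1
        |>.mono fun _ hx => hx.1.trans hx.2,
      (ae_integral_graft_snd volume volume hR z hcube hcube hk' hh hk_snd).and hmem.1.2.2.2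
        |>.mono fun _ hy => hy.1.trans hy.2⟩,
      ae_graft volume hR z hQ (fun q t => t ≤ hbar q) hk_le hmem.2⟩
  obtain ⟨M, hM⟩ := hc_bdd
  have hch : Integrable (fun q => c q * h q) volume :=
    hh.bdd_mul hc_cont.aestronglyMeasurable (ae_of_all _ hM)
  have hck : IntegrableOn (fun p => c (z + (n : ℝ)⁻¹ • p) * k p) (cube d ×ˢ cube d) volume :=
    Integrable.bdd_mul hk
      (by fun_prop : Continuous fun p => c (z + (n : ℝ)⁻¹ • p)).aestronglyMeasurable
      (ae_of_all _ fun _ => hM _)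
  have hcost := hopt _ hcompetitor
  rw [Icost, Icost, mul_graft hR, integral_graft volume hR z hQ hck hch, le_add_iff_nonneg_right]
    at hcost
  exact sub_nonneg.1 (nonneg_of_mul_nonneg_right hcost (by positivity))

/-- **Optimality is inherited by the blow-up sequence** (Proposition 5.2, before Taylor
expansion): if `h` minimizes `I_c` over `Γ(f,g)^h̄`, then for any point `z = (x₀,y₀)` and any
`n ≥ 1`, the blow-up `h_n(p) = h(z + p/n)` minimizes `k ↦ ∫_Q c(z + p/n) k(p) dp` among
nonnegative `k ∈ L¹(Q)` with the same marginals as `h_n` and `k ≤ h̄_n` a.e. on `Q`. -/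
theorem blowup_inherits_optimality (d : ℕ)
    (c : ((Fin d → ℝ) × (Fin d → ℝ)) → ℝ)
    (hc_cont : Continuous c) (hc_bdd : ∃ M, ∀ p, |c p| ≤ M)
    (hbar : ((Fin d → ℝ) × (Fin d → ℝ)) → ℝ)
    (hbar_meas : Measurable hbar) (hbar_nonneg : ∀ p, 0 ≤ hbar p)
    (hbar_bdd : ∃ M, ∀ᵐ p ∂volume, hbar p ≤ M)
    (hbar_supp : HasCompactSupport hbar)
    (f g : (Fin d → ℝ) → ℝ)
    (hf_int : Integrable f volume) (hg_int : Integrable g volume)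
    (hf_nonneg : ∀ x, 0 ≤ f x) (hg_nonneg : ∀ y, 0 ≤ g y)
    (hf_supp : HasCompactSupport f) (hg_supp : HasCompactSupport g)
    (hmass : ∫ x, f x = ∫ y, g y)
    (h : ((Fin d → ℝ) × (Fin d → ℝ)) → ℝ)
    (hmem : InGammaBar f g hbar h)
    (hopt : ∀ k, InGammaBar f g hbar k → Icost c h ≤ Icost c k)
    (z : (Fin d → ℝ) × (Fin d → ℝ)) (n : ℕ) (hn : 1 ≤ n) :
    ∀ k : ((Fin d → ℝ) × (Fin d → ℝ)) → ℝ,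
      IntegrableOn k (cube d ×ˢ cube d) volume →
      (∀ᵐ p ∂volume.restrict (cube d ×ˢ cube d), 0 ≤ k p) →
      (∀ᵐ x ∂volume.restrict (cube d),
        (∫ y in cube d, k (x, y)) = ∫ y in cube d, h (z + (n : ℝ)⁻¹ • (x, y))) →
      (∀ᵐ y ∂volume.restrict (cube d),
        (∫ x in cube d, k (x, y)) = ∫ x in cube d, h (z + (n : ℝ)⁻¹ • (x, y))) →
      (∀ᵐ p ∂volume.restrict (cube d ×ˢ cube d), k p ≤ hbar (z + (n : ℝ)⁻¹ • p)) →
      (∫ p in cube d ×ˢ cube d, c (z + (n : ℝ)⁻¹ • p) * h (z + (n : ℝ)⁻¹ • p)) ≤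
        ∫ p in cube d ×ˢ cube d, c (z + (n : ℝ)⁻¹ • p) * k p :=
  blowup_inherits_optimality_general d c hc_cont hc_bdd hbar f g h hmem hopt z n hn
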